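/- Let Φ : (S,·) → (T,·) be a semigroup homomorphism such that Φ(S) is a J-set in T. If A ⊆ S is a C-set in S, then Φ(A) is a C-set in T. -/

import Mathlib

universe u v

/-- Left fold of multiplication: `mulList x [y₁,…,yₙ] = x * y₁ * ⋯ * yₙ` (product taken
in order; no identity element needed). -/
def mulList {T : Type u} [Mul T] : T → List T → T
  | x, [] => x
  | x, y :: l => mulList (x * y) l

/-- For `m ≥ 1` (here the paper's `m` is `m + 1`), `a ∈ T^{m+2}`, a strictly increasing
`t ∈ ℕ^{m+1}` and `f : ℕ → T`, this is the ordered product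
`x(m,a,t,f) = (∏_{j=1}^{m+1} a(j)·f(t(j))) · a(m+2)`. -/
def xProd {T : Type u} [Mul T] (m : ℕ) (a : Fin (m + 2) → T) (t : Fin (m + 1) → ℕ)
    (f : ℕ → T) : T :=
  mulList (a 0 * f (t 0))
    ((List.ofFn fun j : Fin m => a j.succ.castSucc * f (t j.succ)) ++ [a (Fin.last (m + 1))])

/-- A subset `A` of a semigroup `T` is a *J-set* if for every finite nonempty set `F` of
sequences `f : ℕ → T` there exist `m`, `a ∈ T^{m+1}` and strictly increasing
`t(1) < ⋯ < t(m)` in `ℕ` such that `x(m,a,t,f) ∈ A` for every `f ∈ F`. -/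
def MulJSet {T : Type u} [Mul T] (A : Set T) : Prop :=
  ∀ F : Finset (ℕ → T), F.Nonempty →
    ∃ (m : ℕ) (a : Fin (m + 2) → T) (t : Fin (m + 1) → ℕ),
      StrictMono t ∧ ∀ f ∈ F, xProd m a t f ∈ A

/-- A subset `A` of a semigroup `T` is a *C-set* if there is a downward directed family
`⟨C_i⟩_{i ∈ I}` of subsets of `A` (here `r i j` means `i ≥ j`, `(I,≥)` is a directed set
and `i ≥ j → C_i ⊆ C_j`) such that (1) for each `i ∈ I` and `x ∈ C_i` there is `j ∈ I`
with `C_j ⊆ x⁻¹C_i = {y | x·y ∈ C_i}`, and (2) for each finite nonempty `ℱ ⊆ I`, the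
intersection `⋂_{i ∈ ℱ} C_i` is a J-set in `T`. -/
def MulCSet {T : Type u} [Mul T] (A : Set T) : Prop :=
  ∃ (I : Type u) (r : I → I → Prop) (C : I → Set T),
    Nonempty I ∧ (∀ i, r i i) ∧ (∀ i j k, r i j → r j k → r i k) ∧
    (∀ i j, ∃ k, r k i ∧ r k j) ∧ (∀ i j, r i j → C i ⊆ C j) ∧
    (∀ i, C i ⊆ A) ∧
    (∀ i, ∀ x ∈ C i, ∃ j, C j ⊆ {y | x * y ∈ C i}) ∧
    (∀ ℱ : Finset I, ℱ.Nonempty → MulJSet (⋂ i ∈ ℱ, C i))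

/-! The image of a J-set `B ⊆ S` is a J-set. Given finitely many sequences `f` in `T`, the J-set
`Φ(S)` provides x-products `V_k(f) ∈ Φ(S)` living in pairwise separated, increasing blocks of
times; choose preimages `g_f(k)` and apply the J-set property of `B` to the sequences `g_f`.
Since `Φ` is a homomorphism, the image of the resulting x-product in the `g_f` is obtained by
substituting the blocks `V_{t(j)}(f)` for `g_f(t(j))`, which is again an x-product in `f`.
For C-sets, the defining family `C_i` of `A` is pushed forward to `Φ '' C_i`. -/

theorem mulList_append {T : Type*} [Mul T] (x : T) (l₁ l₂ : List T) :
    mulList x (l₁ ++ l₂) = mulList (mulList x l₁) l₂ := by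
  induction l₁ generalizing x with
  | nil => rfl
  | cons y l ih => exact ih (x * y)

theorem mulList_concat {T : Type*} [Mul T] (x y : T) (l : List T) :
    mulList x (l ++ [y]) = mulList x l * y :=
  mulList_append x l [y]

theorem Fin.strictMono_snoc {α : Type*} [Preorder α] {n : ℕ} {t : Fin (n + 1) → α}
    (ht : StrictMono t) {s : α} (hs : t (Fin.last n) < s) :
    StrictMono (Fin.snoc t s : Fin (n + 2) → α) := by
  refine Fin.strictMono_iff_lt_succ.2 fun i => ?_
  induction i using Fin.lastCases with
  | last => simpa using hs
  | cast j =>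
    rw [Fin.succ_castSucc, Fin.snoc_castSucc, Fin.snoc_castSucc]
    exact ht Fin.castSucc_lt_succ

section XProd

variable {T : Type*} [Semigroup T]

theorem xProd_zero (a : Fin 2 → T) (t : Fin 1 → ℕ) (f : ℕ → T) :
    xProd 0 a t f = a 0 * f (t 0) * a 1 :=
  rfl

theorem xProd_succ (m : ℕ) (a : Fin (m + 3) → T) (t : Fin (m + 2) → ℕ) (f : ℕ → T) :
    xProd (m + 1) a t f =
      xProd m (Fin.init a) (Fin.init t) f * f (t (Fin.last _)) * a (Fin.last _) := by
  simp only [xProd, List.ofFn_succ' (n := m), List.concat_eq_append, mulList_concat, Fin.init,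
    Fin.succ_last, Fin.castSucc_zero, Fin.succ_castSucc, mul_assoc]

theorem map_xProd {S : Type*} [Semigroup S] (φ : S →ₙ* T) (m : ℕ) (a : Fin (m + 2) → S)
    (t : Fin (m + 1) → ℕ) (g : ℕ → S) :
    φ (xProd m a t g) = xProd m (φ ∘ a) t (φ ∘ g) := by
  induction m with
  | zero => simp only [xProd_zero, map_mul, Function.comp_apply]
  | succ m ih => simp only [xProd_succ, map_mul, ih, Fin.comp_init, Function.comp_apply]

end XProd

/-- `IsXProd lo hi V` says that `V = x(m, a, t, ·)` for some `m`, `a` and strictly increasing `t`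
with first time `lo` and last time `hi` (`exists_eq_xProd`, `isXProd_xProd`), built up one factor
`f(t) · b` at a time. -/
inductive IsXProd {T : Type*} [Mul T] : ℕ → ℕ → ((ℕ → T) → T) → Prop
  | single (a b : T) (t : ℕ) : IsXProd t t fun f => a * f t * b
  | snoc {lo hi : ℕ} {V : (ℕ → T) → T} (hV : IsXProd lo hi V) {t : ℕ} (ht : hi < t) (b : T) :
      IsXProd lo t fun f => V f * f t * b

namespace IsXProd

variable {T : Type*} [Semigroup T] {lo hi : ℕ} {V : (ℕ → T) → T}

theorem le (hV : IsXProd lo hi V) : lo ≤ hi := by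
  induction hV with
  | single => rfl
  | snoc _ ht _ ih => exact ih.trans ht.le

theorem mul_const (hV : IsXProd lo hi V) (c : T) : IsXProd lo hi fun f => V f * c := by
  induction hV with
  | single a b t => simpa only [mul_assoc] using single a (b * c) t
  | snoc hV ht b _ => simpa only [mul_assoc] using snoc hV ht (b * c)

theorem const_mul (hV : IsXProd lo hi V) (c : T) : IsXProd lo hi fun f => c * V f := by
  induction hV with
  | single a b t => simpa only [mul_assoc] using single (c * a) b t
  | snoc _ ht b ih => simpa only [mul_assoc] using snoc ih ht b

theorem mul {lo' hi' : ℕ} {W : (ℕ → T) → T} (hV : IsXProd lo hi V) (hW : IsXProd lo' hi' W)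
    (h : hi < lo') : IsXProd lo hi' fun f => V f * W f := by
  induction hW with
  | single a b t => simpa only [mul_assoc] using snoc (hV.mul_const a) h b
  | snoc hW ht b ih => simpa only [mul_assoc] using snoc (ih h) ht b

theorem subst {W : (ℕ → T) → T} (hW : IsXProd lo hi W) {first last : ℕ → ℕ}
    {V : ℕ → (ℕ → T) → T} (hV : ∀ k, IsXProd (first k) (last k) (V k))
    (hsep : ∀ j k, j < k → last j < first k) :
    IsXProd (first lo) (last hi) fun f => W fun k => V k f := by
  induction hW with
  | single a b t => exact ((hV t).const_mul a).mul_const b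
  | snoc _ ht b ih => exact (ih.mul (hV _) (hsep _ _ ht)).mul_const b

theorem exists_eq_xProd (hV : IsXProd lo hi V) :
    ∃ (m : ℕ) (a : Fin (m + 2) → T) (t : Fin (m + 1) → ℕ),
      StrictMono t ∧ t (Fin.last m) = hi ∧ V = xProd m a t := by
  induction hV with
  | single a b t => exact ⟨0, ![a, b], ![t], Subsingleton.strictMono (α := Fin 1) _, rfl, rfl⟩
  | snoc _ hlt b ih =>
    obtain ⟨m, a, t, ht, rfl, rfl⟩ := ih
    refine ⟨m + 1, Fin.snoc a b, Fin.snoc t _, Fin.strictMono_snoc ht hlt, Fin.snoc_last _ _, ?_⟩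
    funext f
    simp only [xProd_succ, Fin.init_snoc, Fin.snoc_last]

end IsXProd

theorem isXProd_xProd {T : Type*} [Semigroup T] {m : ℕ} (a : Fin (m + 2) → T)
    {t : Fin (m + 1) → ℕ} (ht : StrictMono t) :
    IsXProd (t 0) (t (Fin.last m)) (xProd m a t) := by
  induction m with
  | zero => exact IsXProd.single (a 0) (a 1) (t 0)
  | succ m ih =>
    have hinit : IsXProd (t 0) (t (Fin.last m).castSucc) (xProd m (Fin.init a) (Fin.init t)) :=
      ih (Fin.init a) (ht.comp Fin.strictMono_castSucc)
    have hsnoc := hinit.snoc (ht (Fin.castSucc_lt_last _)) (a (Fin.last _))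
    rwa [← funext (xProd_succ m a t)] at hsnoc

namespace MulJSet

variable {T : Type*} [Semigroup T] {A : Set T}

theorem mono {B : Set T} (hA : MulJSet A) (hAB : A ⊆ B) : MulJSet B := fun F hF =>
  let ⟨m, a, t, ht, hmem⟩ := hA F hF
  ⟨m, a, t, ht, fun f hf => hAB (hmem f hf)⟩

/-- Apply the J-set property to the shifted sequences `n ↦ f (n + N + 1)`. -/
theorem exists_isXProd_gt (hA : MulJSet A) {F : Finset (ℕ → T)} (hF : F.Nonempty) (N : ℕ) :
    ∃ (lo hi : ℕ) (V : (ℕ → T) → T), N < lo ∧ IsXProd lo hi V ∧ ∀ f ∈ F, V f ∈ A := by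
  classical
  obtain ⟨m, a, t, ht, hmem⟩ := hA (F.image fun f n => f (n + (N + 1))) (hF.image _)
  have hshift : StrictMono fun i => t i + (N + 1) := fun i j hij => by simpa using ht hij
  exact ⟨_, _, xProd m a _, by omega, isXProd_xProd a hshift,
    fun f hf => hmem _ (Finset.mem_image_of_mem _ hf)⟩

theorem exists_seq_isXProd (hA : MulJSet A) {F : Finset (ℕ → T)} (hF : F.Nonempty) :
    ∃ (first last : ℕ → ℕ) (V : ℕ → (ℕ → T) → T), (∀ k, IsXProd (first k) (last k) (V k)) ∧
      (∀ j k, j < k → last j < first k) ∧ ∀ k, ∀ f ∈ F, V k f ∈ A := by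
  choose first last V hgt hV hmem using hA.exists_isXProd_gt hF
  -- block `k + 1` is chosen beyond the last time of block `k`
  let N : ℕ → ℕ := fun k => last^[k] 0
  have hN_succ (k : ℕ) : N (k + 1) = last (N k) := Function.iterate_succ_apply' last k 0
  have hN : StrictMono N := strictMono_nat_of_lt_succ fun k =>
    hN_succ k ▸ (hgt (N k)).trans_le (hV (N k)).le
  refine ⟨first ∘ N, last ∘ N, V ∘ N, fun k => hV _, fun j k hjk => ?_, fun k => hmem _⟩
  calc last (N j) = N (j + 1) := (hN_succ j).symm
    _ ≤ N k := hN.monotone hjk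
    _ < first (N k) := hgt _

theorem image {S : Type*} [Semigroup S] (φ : S →ₙ* T) (hrange : MulJSet (Set.range φ))
    {B : Set S} (hB : MulJSet B) : MulJSet (φ '' B) := by
  classical
  intro F hF
  obtain ⟨first, last, V, hV, hsep, hrangeV⟩ := hrange.exists_seq_isXProd hF
  choose σ hσ using fun (f : F) k => hrangeV k f f.2
  obtain ⟨M, b, τ, hτ, hmem⟩ := hB (F.attach.image σ) (hF.attach.image σ)
  obtain ⟨m, a, t, ht, -, hxProd⟩ := ((isXProd_xProd (φ ∘ b) hτ).subst hV hsep).exists_eq_xProd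
  refine ⟨m, a, t, ht, fun f hf => ?_⟩
  have hσf : φ ∘ σ ⟨f, hf⟩ = fun k => V k f := funext (hσ ⟨f, hf⟩)
  refine ⟨_, hmem _ (Finset.mem_image_of_mem σ (F.mem_attach ⟨f, hf⟩)), ?_⟩
  rw [map_xProd, hσf, ← hxProd]

end MulJSet

/-- If `Φ : S → T` is a semigroup homomorphism such that `Φ(S)` is a J-set in `T`, and
`A ⊆ S` is a C-set in `S`, then `Φ(A)` is a C-set in `T`. -/
theorem mulCSet_image_of_mulCSet {S : Type u} {T : Type v}
    [Semigroup S] [Semigroup T] (Φ : S → T)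
    (hΦ : ∀ x y : S, Φ (x * y) = Φ x * Φ y)
    (hrange : MulJSet (Set.range Φ))
    (A : Set S) (hA : MulCSet A) : MulCSet (Φ '' A) := by
  classical
  obtain ⟨I, r, C, hne, -, -, hdir, hmono, hsub, hshift, hJ⟩ := hA
  -- The images `Φ '' C i` themselves index the new family, which keeps the index type in `Type v`.
  let D : I → Set T := fun i => Φ '' C i
  choose idx hidx using fun E : Set.range D => E.2
  refine ⟨Set.range D, fun E E' => E.1 ⊆ E'.1, Subtype.val, hne.map fun i => ⟨D i, i, rfl⟩,
    fun _ => subset_rfl, fun _ _ _ => Set.Subset.trans, ?_, fun _ _ => id, ?_, ?_, ?_⟩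
  · rintro ⟨_, i, rfl⟩ ⟨_, j, rfl⟩
    obtain ⟨k, hki, hkj⟩ := hdir i j
    exact ⟨⟨D k, k, rfl⟩, Set.image_mono (hmono _ _ hki), Set.image_mono (hmono _ _ hkj)⟩
  · rintro ⟨_, i, rfl⟩
    exact Set.image_mono (hsub i)
  · rintro ⟨_, i, rfl⟩ _ ⟨s, hs, rfl⟩
    obtain ⟨j, hj⟩ := hshift i s hs
    refine ⟨⟨D j, j, rfl⟩, ?_⟩
    rintro _ ⟨s', hs', rfl⟩
    exact ⟨s * s', hj hs', hΦ s s'⟩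
  · intro ℱ hℱ
    refine (MulJSet.image ⟨Φ, hΦ⟩ hrange (hJ _ (hℱ.image idx))).mono ?_
    rintro _ ⟨s, hs, rfl⟩
    refine Set.mem_iInter₂.2 fun E hE => hidx E ▸ ⟨s, Set.mem_iInter₂.1 hs _ ?_, rfl⟩
    exact Finset.mem_image_of_mem idx hE
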